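/- arXiv:2010.14338 — 4 statements merged into one kernel-verified Lean document; each statement's English description precedes it below -/
import Mathlib

section
/- Let (P,D) be a MinGMConn instance in which all input points have pairwise distinct x-coordinates and pairwise distinct y-coordinates, and suppose D is monotone (y(p) < y(q) for every demand (p,q)). Then IR(P,D) ≤ VS(P,D) ≤ opt(P,D). -/
abbrev Pt := ℝ × ℝ
abbrev Dem := Pt × Pt

noncomputable section

/-- ℓ1 distance in the plane. -/
def dist1 (p q : Pt) : ℝ := |p.1 - q.1| + |p.2 - q.2|

/-- Two points are aligned if they are vertically or horizontally aligned. -/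
def Aligned (p q : Pt) : Prop := p.1 = q.1 ∨ p.2 = q.2

/-- `p` and `q` are Manhattan-connected in the point set `S`: the Manhattan graph on `S`
contains a rectilinear path from `p` to `q` of total length `‖p - q‖₁`. -/
def MConnected (S : Set Pt) (p q : Pt) : Prop :=
  ∃ (k : ℕ) (f : Fin (k + 1) → Pt),
    f 0 = p ∧ f (Fin.last k) = q ∧ (∀ i, f i ∈ S) ∧
    (∀ i : Fin k, Aligned (f i.castSucc) (f i.succ)) ∧
    (∑ i : Fin k, dist1 (f i.castSucc) (f i.succ)) = dist1 p q

/-- `Q` is a feasible solution for the instance `(P, D)`. -/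
def MFeasible (P : Set Pt) (D : Set Dem) (Q : Set Pt) : Prop :=
  ∀ d ∈ D, MConnected (P ∪ Q) d.1 d.2

/-- Minimum cardinality of a feasible solution. -/
def optN (P : Set Pt) (D : Set Dem) : ℕ :=
  sInf {n | ∃ Q : Finset Pt, MFeasible P D ↑Q ∧ Q.card = n}

/-- The closed axis-aligned rectangle spanned by `p` and `q`. -/
def Rect (p q : Pt) : Set Pt :=
  {z | min p.1 q.1 ≤ z.1 ∧ z.1 ≤ max p.1 q.1 ∧ min p.2 q.2 ≤ z.2 ∧ z.2 ≤ max p.2 q.2}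

/-- The interior of the axis-aligned rectangle spanned by `p` and `q`. -/
def RectInt (p q : Pt) : Set Pt :=
  {z | min p.1 q.1 < z.1 ∧ z.1 < max p.1 q.1 ∧ min p.2 q.2 < z.2 ∧ z.2 < max p.2 q.2}

/-- The four corners of the rectangle spanned by `p` and `q`. -/
def Corners (p q : Pt) : Set Pt := {(p.1, p.2), (p.1, q.2), (q.1, p.2), (q.1, q.2)}

/-- Two demand rectangles are non-conflicting if neither contains a corner of the other
in its interior. -/
def NonConflicting (d e : Dem) : Prop :=
  (∀ c ∈ Corners e.1 e.2, c ∉ RectInt d.1 d.2) ∧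
  (∀ c ∈ Corners d.1 d.2, c ∉ RectInt e.1 e.2)

/-- `IRN D` : maximum cardinality of an independent (pairwise non-conflicting) subset of `D`. -/
def IRN (D : Set Dem) : ℕ :=
  sSup {n | ∃ D' : Finset Dem, ↑D' ⊆ D ∧ D'.card = n ∧
    ∀ d ∈ D', ∀ e ∈ D', d ≠ e → NonConflicting d e}

/-- The vertical segment at `x = a` spanning the `y`-range between `y1` and `y2`. -/
def VSeg (a y1 y2 : ℝ) : Set Pt :=
  {z | z.1 = a ∧ min y1 y2 ≤ z.2 ∧ z.2 ≤ max y1 y2}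

/-- A finite set of demands is vertically separable: its demand rectangles can be ordered
`R₁, …, R_k` with vertical segments `ℓ₁, …, ℓ_k`, where `ℓᵢ` connects the interior of the top
boundary of `Rᵢ` with the interior of its bottom boundary and avoids `R_j` for all `j > i`. -/
def VertSeparable (D' : Finset Dem) : Prop :=
  ∃ (e : Fin D'.card → Dem) (a : Fin D'.card → ℝ),
    Function.Injective e ∧ (∀ i, e i ∈ D') ∧
    (∀ i, min (e i).1.1 (e i).2.1 < a i ∧ a i < max (e i).1.1 (e i).2.1) ∧
    ∀ i j : Fin D'.card, i < j →
      VSeg (a i) (e i).1.2 (e i).2.2 ∩ Rect (e j).1 (e j).2 = ∅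

/-- `VSN D` : maximum cardinality of a vertically separable subset of `D`. -/
def VSN (D : Set Dem) : ℕ :=
  sSup {n | ∃ D' : Finset Dem, ↑D' ⊆ D ∧ D'.card = n ∧ VertSeparable D'}

/-- `λ(p,q)` : the left vertical side of the demand rectangle `R(p,q)`. -/
def LSeg (d : Dem) : Set Pt := VSeg d.1.1 d.1.2 d.2.2

/-- `ρ(p,q)` : the right vertical side of the demand rectangle `R(p,q)`. -/
def RSeg (d : Dem) : Set Pt := VSeg d.2.1 d.1.2 d.2.2

/-- A left boundary independent set: the left sides are pairwise non-overlapping. -/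
def LeftBIS (D' : Finset Dem) : Prop :=
  ∀ d ∈ D', ∀ e ∈ D', d ≠ e → Set.Subsingleton (LSeg d ∩ LSeg e)

/-- A right boundary independent set: the right sides are pairwise non-overlapping. -/
def RightBIS (D' : Finset Dem) : Prop :=
  ∀ d ∈ D', ∀ e ∈ D', d ≠ e → Set.Subsingleton (RSeg d ∩ RSeg e)

/-- `ISN D` : maximum cardinality of a (left or right) boundary independent subset of `D`. -/
def ISN (D : Set Dem) : ℕ :=
  sSup {n | ∃ D' : Finset Dem, ↑D' ⊆ D ∧ D'.card = n ∧ (LeftBIS D' ∨ RightBIS D')}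

/-- `(P, D)` is a MinGMConn instance: demands are between input points, ordered by
`x`-coordinate. -/
def IsInstance (P : Finset Pt) (D : Finset Dem) : Prop :=
  ∀ d ∈ D, d.1 ∈ P ∧ d.2 ∈ P ∧ d.1.1 < d.2.1

/-- The points of `P` have pairwise distinct `x`-coordinates. -/
def DistinctX (P : Finset Pt) : Prop := ∀ p ∈ P, ∀ q ∈ P, p ≠ q → p.1 ≠ q.1

/-- The points of `P` have pairwise distinct `y`-coordinates. -/
def DistinctY (P : Finset Pt) : Prop := ∀ p ∈ P, ∀ q ∈ P, p ≠ q → p.2 ≠ q.2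

end

noncomputable section

/-- The `i`-th open vertical strip determined by boundaries `b` (with `b 0 = ⊥`, `b s = ⊤`). -/
def strip (s : ℕ) (b : Fin (s + 1) → EReal) (i : Fin s) : Set Pt :=
  {z | b i.castSucc < (z.1 : EReal) ∧ (z.1 : EReal) < b i.succ}

/-- `b` describes a strip subdivision into `s` vertical strips via `s - 1` vertical lines,
none of which passes through a point of `P`. -/
def IsStripSubdivision (s : ℕ) (b : Fin (s + 1) → EReal) (P : Finset Pt) : Prop :=
  1 ≤ s ∧ StrictMono b ∧ b 0 = ⊥ ∧ b (Fin.last s) = ⊤ ∧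
    ∀ p ∈ P, ∀ i : Fin (s + 1), (p.1 : EReal) ≠ b i

/-- The projections `π_𝒮(P)` of the points of `P` onto the adjacent strip boundaries. -/
def stripProj (s : ℕ) (b : Fin (s + 1) → EReal) (P : Set Pt) : Set Pt :=
  {z | ∃ p ∈ P, ∃ i : Fin s, p ∈ strip s b i ∧
    ((i.val ≠ 0 ∧ z = ((b i.castSucc).toReal, p.2)) ∨
     (i.val + 1 ≠ s ∧ z = ((b i.succ).toReal, p.2)))}

/-- The demand set `π_𝒮(D)` of the inter-strip instance: demands between points in
different, non-adjacent strips, projected to the adjacent strip boundaries. -/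
def stripDem (s : ℕ) (b : Fin (s + 1) → EReal) (D : Set Dem) : Set Dem :=
  {d | ∃ pq ∈ D, ∃ i j : Fin s,
    pq.1 ∈ strip s b i ∧ pq.2 ∈ strip s b j ∧ i.val + 2 ≤ j.val ∧
    d = (((b i.succ).toReal, pq.1.2), ((b j.castSucc).toReal, pq.2.2))}

/-- `p 0, …, p n` form a triangular instance of size `n` :
`x`-coordinates strictly increasing, while `p 1, …, p n` form a descending diagonal
lying to the top-right of `p 0`. -/
def IsTriangular (n : ℕ) (p : Fin (n + 1) → Pt) : Prop :=
  (∀ i j : Fin (n + 1), i < j → (p i).1 < (p j).1) ∧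
  (∀ i j : Fin (n + 1), i ≠ 0 → i < j → (p j).2 < (p i).2) ∧
  (∀ i : Fin (n + 1), i ≠ 0 → (p 0).2 < (p i).2)

/-- The point set of a triangular instance. -/
def triP (n : ℕ) (p : Fin (n + 1) → Pt) : Finset Pt := Finset.image p Finset.univ

/-- The demand set of a triangular instance: `(p 0, p i)` for `1 ≤ i ≤ n`. -/
def triD (n : ℕ) (p : Fin (n + 1) → Pt) : Finset Dem :=
  Finset.image (fun i => (p 0, p i)) (Finset.univ.filter fun i : Fin (n + 1) => i ≠ 0)

/-- The triangular grid of a triangular instance. -/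
def triGrid (n : ℕ) (p : Fin (n + 1) → Pt) : Set Pt :=
  {z | (∃ i, z.1 = (p i).1) ∧ (∃ j, z.2 = (p j).2) ∧
    ∃ i : Fin (n + 1), i ≠ 0 ∧ z ∈ Rect (p 0) (p i)}

/-- `Q` is arboreally satisfied: for every non-aligned pair of its points, the rectangle
they span contains a third point of `Q`. -/
def ArboreallySatisfied (Q : Finset Pt) : Prop :=
  ∀ p ∈ Q, ∀ q ∈ Q, ¬ Aligned p q → ∃ r ∈ Q, r ≠ p ∧ r ≠ q ∧ r ∈ Rect p q

/-- The Manhattan graph on a finite point set `S`. -/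
def manhattanGraph (S : Finset Pt) : SimpleGraph {x : Pt // x ∈ S} where
  Adj a b := a ≠ b ∧ Aligned a.1 b.1
  symm := ⟨fun _ _ h => ⟨h.1.symm, h.2.imp Eq.symm Eq.symm⟩⟩
  loopless := ⟨fun _ h => h.1 rfl⟩

/-- The demand graph of an instance `(P, D)`. -/
def demandGraph (P : Finset Pt) (D : Finset Dem) : SimpleGraph {x : Pt // x ∈ P} where
  Adj a b := a ≠ b ∧ (((a : Pt), (b : Pt)) ∈ D ∨ ((b : Pt), (a : Pt)) ∈ D)
  symm := ⟨fun _ _ h => ⟨h.1.symm, h.2.symm⟩⟩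
  loopless := ⟨fun _ h => h.1 rfl⟩

/-- `C` is an axis-aligned rectangle: a product of two intervals. -/
def IsAxisRect (C : Set Pt) : Prop :=
  ∃ I J : Set ℝ, I.OrdConnected ∧ J.OrdConnected ∧ C = I ×ˢ J

end


/-!
`VS ≤ opt`: given separating segments `ℓᵢ`, move each one off the abscissae of `P ∪ Q`; this is
possible because the admissible positions form an open set. A feasible `Q` gives every demand a
monotone path, which crosses `ℓᵢ` along a horizontal edge inside `Rᵢ`. Charge demand `i` to the
first point of `P ∪ Q` right of `ℓᵢ` on the line of that edge, or, if this is the unique input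
point at that height, to the leftmost point of `P ∪ Q` there. Since `ℓᵢ` misses all later
rectangles, the charge is injective, and it always lands in `Q`.

`IR ≤ VS`: order an independent set by top side, then by left side. The later rectangles crossing
the top line of `Rᵢ` have laminar `x`-ranges, none of which covers the part of the top side of `Rᵢ`
left of the later rectangles with the same top. Any point of that part outside all of these ranges
carries `ℓᵢ`.
-/

open Finset

lemma Fin.sum_succ_sub_castSucc {G : Type*} [AddCommGroup G] {k : ℕ} (g : Fin (k + 1) → G) :
    ∑ i : Fin k, (g i.succ - g i.castSucc) = g (Fin.last k) - g 0 := by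
  induction k with
  | zero => simp
  | succ k ih =>
    rw [Fin.sum_univ_castSucc, Fin.succ_last]
    simp only [Fin.succ_castSucc]
    rw [ih (fun i => g i.castSucc)]
    simp only [Fin.castSucc_zero]
    abel

lemma Fin.exists_castSucc_lt_le_succ {k : ℕ} (g : Fin (k + 1) → ℝ) {a : ℝ} (h0 : g 0 < a)
    (hlast : a ≤ g (Fin.last k)) : ∃ i : Fin k, g i.castSucc < a ∧ a ≤ g i.succ := by
  induction k with
  | zero => exact absurd hlast (not_le.2 h0)
  | succ k ih =>
    by_cases hk : g (Fin.last k).castSucc < a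
    · exact ⟨Fin.last k, hk, by rwa [Fin.succ_last]⟩
    · obtain ⟨i, hi⟩ := ih (fun i => g i.castSucc) h0 (not_lt.1 hk)
      exact ⟨i.castSucc, hi.1, by rw [Fin.succ_castSucc]; exact hi.2⟩

lemma monotone_of_sum_dist1_eq {k : ℕ} {f : Fin (k + 1) → Pt} (hle : f 0 ≤ f (Fin.last k))
    (hsum : ∑ i : Fin k, dist1 (f i.castSucc) (f i.succ) = dist1 (f 0) (f (Fin.last k))) :
    Monotone f := by
  set δ : Fin k → Pt := fun i => f i.succ - f i.castSucc
  have htel : ∑ i, δ i = f (Fin.last k) - f 0 := Fin.sum_succ_sub_castSucc f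
  have hfst : ∑ i, (δ i).1 = (f (Fin.last k)).1 - (f 0).1 := by rw [← Prod.fst_sum, htel]; rfl
  have hsnd : ∑ i, (δ i).2 = (f (Fin.last k)).2 - (f 0).2 := by rw [← Prod.snd_sum, htel]; rfl
  have hdist : ∀ i, dist1 (f i.castSucc) (f i.succ) = |(δ i).1| + |(δ i).2| := fun i => by
    simp only [dist1, δ, Prod.fst_sub, Prod.snd_sub]
    rw [abs_sub_comm (f i.castSucc).1, abs_sub_comm (f i.castSucc).2]
  have hslack : ∑ i, ((|(δ i).1| - (δ i).1) + (|(δ i).2| - (δ i).2)) = 0 := by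
    rw [sum_congr rfl fun i _ => hdist i] at hsum
    simp only [dist1, abs_sub_comm (f 0).1, abs_sub_comm (f 0).2,
      abs_of_nonneg (sub_nonneg.2 hle.1), abs_of_nonneg (sub_nonneg.2 hle.2)] at hsum
    simp only [sum_add_distrib, sum_sub_distrib] at hsum ⊢
    linarith
  have hzero := (sum_eq_zero_iff_of_nonneg fun i _ =>
    add_nonneg (sub_nonneg.2 (le_abs_self (δ i).1)) (sub_nonneg.2 (le_abs_self (δ i).2))).1 hslack
  refine Fin.monotone_iff_le_succ.2 fun i => ?_
  have hi := hzero i (mem_univ i)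
  have h₁ : 0 ≤ (δ i).1 := by
    linarith [le_abs_self (δ i).1, le_abs_self (δ i).2, abs_nonneg (δ i).1]
  have h₂ : 0 ≤ (δ i).2 := by
    linarith [le_abs_self (δ i).1, le_abs_self (δ i).2, abs_nonneg (δ i).2]
  exact ⟨sub_nonneg.1 h₁, sub_nonneg.1 h₂⟩

lemma MConnected.exists_horizontal_crossing {S : Set Pt} {p q : Pt} (h : MConnected S p q)
    (hpq : p ≤ q) {a : ℝ} (hpa : p.1 < a) (haq : a < q.1) (haS : ∀ z ∈ S, z.1 ≠ a) :
    ∃ u ∈ S, ∃ w ∈ S, u.2 = w.2 ∧ u.1 < a ∧ a < w.1 ∧ u ∈ Set.Icc p q ∧ w ∈ Set.Icc p q := by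
  obtain ⟨k, f, rfl, rfl, hS, halign, hsum⟩ := h
  have hmono := monotone_of_sum_dist1_eq hpq hsum
  have hbox : ∀ i, f i ∈ Set.Icc (f 0) (f (Fin.last k)) := fun i =>
    ⟨hmono (Fin.zero_le i), hmono (Fin.le_last i)⟩
  obtain ⟨i, hlt, hle⟩ := Fin.exists_castSucc_lt_le_succ (fun i => (f i).1) hpa haq.le
  have hlt' : a < (f i.succ).1 := lt_of_le_of_ne hle (haS _ (hS _)).symm
  have hy : (f i.castSucc).2 = (f i.succ).2 :=
    (halign i).resolve_left (hlt.trans hlt').ne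
  exact ⟨_, hS _, _, hS _, hy, hlt, hlt', hbox _, hbox _⟩


lemma DistinctX.eq_of_fst_eq {P : Finset Pt} (h : DistinctX P) {p q : Pt} (hp : p ∈ P)
    (hq : q ∈ P) (hpq : p.1 = q.1) : p = q :=
  by_contra fun hne => h p hp q hq hne hpq

lemma DistinctY.eq_of_snd_eq {P : Finset Pt} (h : DistinctY P) {p q : Pt} (hp : p ∈ P)
    (hq : q ∈ P) (hpq : p.2 = q.2) : p = q :=
  by_contra fun hne => h p hp q hq hne hpq

lemma vSeg_inter_rect_eq_empty_iff {x y₁ y₂ : ℝ} {p q : Pt} (hy : y₁ ≤ y₂) (hpq : p ≤ q) :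
    VSeg x y₁ y₂ ∩ Rect p q = ∅ ↔ x < p.1 ∨ q.1 < x ∨ y₂ < p.2 ∨ q.2 < y₁ := by
  simp only [Set.eq_empty_iff_forall_notMem, Set.mem_inter_iff, VSeg, Rect, Set.mem_ofPred_eq,
    min_eq_left hy, max_eq_right hy, min_eq_left hpq.1, max_eq_right hpq.1,
    min_eq_left hpq.2, max_eq_right hpq.2]
  constructor
  · intro h
    by_contra! hc
    exact h (x, max y₁ p.2) ⟨⟨rfl, le_max_left _ _, max_le hy hc.2.2.1⟩,
      hc.1, hc.2.1, le_max_right _ _, max_le hc.2.2.2 hpq.2⟩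
  · rintro h z ⟨⟨rfl, hz₁, hz₂⟩, hz₃, hz₄, hz₅, hz₆⟩
    rcases h with h | h | h | h <;> linarith

lemma isOpen_setOf_vSeg_inter_rect_eq_empty {y₁ y₂ : ℝ} {p q : Pt} (hy : y₁ ≤ y₂)
    (hpq : p ≤ q) : IsOpen {x | VSeg x y₁ y₂ ∩ Rect p q = ∅} := by
  simp only [vSeg_inter_rect_eq_empty_iff hy hpq, Set.ofPred_or]
  exact isOpen_Iio.union (isOpen_Ioi.union (isOpen_const.union isOpen_const))

lemma exists_separating_notMem {ι : Type*} [Finite ι] (F : Finset ℝ) {y₁ y₂ : ℝ}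
    (hy : y₁ ≤ y₂) {p q : ι → Pt} (hpq : ∀ j, p j ≤ q j) {l r a : ℝ} (hla : l < a)
    (har : a < r) (ha : ∀ j, VSeg a y₁ y₂ ∩ Rect (p j) (q j) = ∅) :
    ∃ x ∉ F, l < x ∧ x < r ∧ ∀ j, VSeg x y₁ y₂ ∩ Rect (p j) (q j) = ∅ := by
  set G := Set.Ioo l r ∩ ⋂ j, {x | VSeg x y₁ y₂ ∩ Rect (p j) (q j) = ∅}
  have hG : IsOpen G := isOpen_Ioo.inter
    (isOpen_iInter_of_finite fun j => isOpen_setOf_vSeg_inter_rect_eq_empty hy (hpq j))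
  have haG : a ∈ G := ⟨⟨hla, har⟩, Set.mem_iInter.2 ha⟩
  obtain ⟨x, hxG, hxF⟩ :=
    ((infinite_of_mem_nhds a (hG.mem_nhds haG)).sdiff F.finite_toSet).nonempty
  exact ⟨x, hxF, hxG.1.1, hxG.1.2, fun j => Set.mem_iInter.1 hxG.2 j⟩

lemma exists_leftmost_on_line {S : Finset Pt} (r : ℝ → Prop) [DecidablePred r] {w : Pt}
    (hw : w ∈ S) {y : ℝ} (hwy : w.2 = y) (hwr : r w.1) :
    ∃ z ∈ S, z.2 = y ∧ r z.1 ∧ ∀ z' ∈ S, z'.2 = y → r z'.1 → z.1 ≤ z'.1 := by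
  obtain ⟨z, hz, hmin⟩ := (S.filter fun z => z.2 = y ∧ r z.1).exists_min_image Prod.fst
    ⟨w, mem_filter.2 ⟨hw, hwy, hwr⟩⟩
  obtain ⟨hzS, hzy, hzr⟩ := mem_filter.1 hz
  exact ⟨z, hzS, hzy, hzr, fun z' hz' hy hr => hmin z' (mem_filter.2 ⟨hz', hy, hr⟩)⟩

lemma card_le_card_of_crossings {ι : Type*} [Fintype ι] [LinearOrder ι] {P Q : Finset Pt}
    (hY : DistinctY P) {a : ι → ℝ} {u w : ι → Pt} (hu : ∀ i, u i ∈ P ∪ Q)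
    (hw : ∀ i, w i ∈ P ∪ Q) (huw : ∀ i, (u i).2 = (w i).2) (hua : ∀ i, (u i).1 < a i)
    (haw : ∀ i, a i < (w i).1)
    (hsep : ∀ i j, i < j → (u i).2 = (u j).2 → ¬((u j).1 ≤ a i ∧ a i ≤ (w j).1)) :
    Fintype.card ι ≤ Q.card := by
  choose s hsS hs₂ hs₁ hsmin using fun i =>
    exists_leftmost_on_line (a i < ·) (hw i) (huw i).symm (haw i)
  choose ℓ hℓS hℓ₂ _ hℓmin using fun i =>
    exists_leftmost_on_line (fun _ => True) (hu i) rfl trivial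
  have hs_inj : Function.Injective s := by
    suffices h : ∀ i j, i < j → s i ≠ s j by
      intro i j hij
      by_contra hne
      rcases lt_or_gt_of_ne hne with hlt | hlt
      exacts [h i j hlt hij, h j i hlt hij.symm]
    intro i j hij heq
    have hc : (u i).2 = (u j).2 := by rw [← hs₂ i, heq, hs₂ j]
    refine hsep i j hij hc ⟨?_, ?_⟩
    · by_contra! h
      have := hsmin i (u j) (hu j) hc.symm h
      linarith [hua j, hs₁ j, heq ▸ this]
    · have := hsmin j (w j) (hw j) (huw j).symm (haw j)
      linarith [hs₁ i, heq ▸ this]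
  have hℓs : ∀ i j, ℓ j ≠ s i := by
    intro i j heq
    have := hℓmin j (u i) (hu i) (by rw [← hℓ₂ j, heq, hs₂ i]) trivial
    linarith [hua i, hs₁ i, heq ▸ this]
  have hsP : ∀ i, s i ∉ Q → s i ∈ P := fun i hsQ => (mem_union.1 (hsS i)).resolve_right hsQ
  let φ i := if s i ∈ Q then s i else ℓ i
  have hφQ : ∀ i, φ i ∈ Q := by
    intro i
    by_cases hsQ : s i ∈ Q
    · simp only [φ, if_pos hsQ, hsQ]
    · simp only [φ, if_neg hsQ]
      refine (mem_union.1 (hℓS i)).resolve_left fun hℓP => hℓs i i ?_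
      exact hY.eq_of_snd_eq hℓP (hsP i hsQ) ((hℓ₂ i).trans (hs₂ i).symm)
  have hφ_inj : Function.Injective φ := by
    intro i j h
    simp only [φ] at h
    split_ifs at h with hi hj hj
    · exact hs_inj h
    · exact absurd h.symm (hℓs i j)
    · exact absurd h (hℓs j i)
    · refine hs_inj (hY.eq_of_snd_eq (hsP i hi) (hsP j hj) ?_)
      rw [hs₂ i, hs₂ j, ← hℓ₂ i, ← hℓ₂ j, h]
  rw [← card_univ]
  exact card_le_card_of_injOn φ (fun i _ => hφQ i) hφ_inj.injOn

lemma IsInstance.mono {P : Finset Pt} {D D' : Finset Dem} (h : IsInstance P D) (hsub : D' ⊆ D) :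
    IsInstance P D' :=
  fun d hd => h d (hsub hd)

lemma card_le_card_of_vertSeparable {P Q : Finset Pt} {D : Finset Dem} (hinst : IsInstance P D)
    (hY : DistinctY P) (hmono : ∀ d ∈ D, d.1.2 < d.2.2) (hvs : VertSeparable D)
    (hQ : MFeasible ↑P ↑D ↑Q) : D.card ≤ Q.card := by
  obtain ⟨e, A, -, he, hA, hsep⟩ := hvs
  have hle : ∀ i, (e i).1 ≤ (e i).2 := fun i => ⟨(hinst _ (he i)).2.2.le, (hmono _ (he i)).le⟩
  -- move each separating line off the finitely many abscissae of `P ∪ Q`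
  have hx : ∀ i, ∃ x ∉ (P ∪ Q).image Prod.fst, (e i).1.1 < x ∧ x < (e i).2.1 ∧
      ∀ j, i < j → VSeg x (e i).1.2 (e i).2.2 ∩ Rect (e j).1 (e j).2 = ∅ := by
    intro i
    have hl := min_eq_left (hle i).1 ▸ (hA i).1
    have hr := max_eq_right (hle i).1 ▸ (hA i).2
    obtain ⟨x, hxF, hlx, hxr, hx⟩ := exists_separating_notMem (ι := {j // i < j})
      ((P ∪ Q).image Prod.fst) (hle i).2 (fun j => hle j) hl hr (fun j => hsep i j j.2)
    exact ⟨x, hxF, hlx, hxr, fun j hij => hx ⟨j, hij⟩⟩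
  choose x hxF hlx hxr hxsep using hx
  have hcross := fun i => (hQ _ (he i)).exists_horizontal_crossing (hle i) (hlx i) (hxr i)
    fun z hz hzx => hxF i (mem_image.2 ⟨z, mem_union.2 hz, hzx⟩)
  choose u hu w hw huw hux hxw huR hwR using hcross
  have hsep' : ∀ i j, i < j → (u i).2 = (u j).2 → ¬((u j).1 ≤ x i ∧ x i ≤ (w j).1) := by
    rintro i j hij hc ⟨hujx, hxwj⟩
    rcases (vSeg_inter_rect_eq_empty_iff (hle i).2 (hle j)).1 (hxsep i j hij) with h | h | h | h
      <;> linarith [(huR i).1.2, (huR i).2.2, (huR j).1.1, (huR j).1.2, (huR j).2.2, (hwR j).2.1]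
  simpa using card_le_card_of_crossings hY (fun i => mem_union.2 (hu i))
    (fun i => mem_union.2 (hw i)) huw hux hxw hsep'

lemma MFeasible.mono {P Q : Set Pt} {D D' : Set Dem} (h : MFeasible P D Q) (hsub : D' ⊆ D) :
    MFeasible P D' Q :=
  fun d hd => h d (hsub hd)

lemma mFeasible_image_corner {P : Finset Pt} {D : Finset Dem} (hinst : IsInstance P D) :
    MFeasible ↑P ↑D ↑(D.image fun d => ((d.2.1, d.1.2) : Pt)) := by
  intro d hd
  obtain ⟨hp, hq, -⟩ := hinst d hd
  refine ⟨2, ![d.1, (d.2.1, d.1.2), d.2], rfl, rfl, fun i => ?_, fun i => ?_, ?_⟩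
  · fin_cases i
    · exact Or.inl hp
    · exact Or.inr (mem_image_of_mem _ hd)
    · exact Or.inl hq
  · fin_cases i
    · exact Or.inr rfl
    · exact Or.inl rfl
  · simp [Fin.sum_univ_two, dist1]

lemma exists_mFeasible_card_eq_optN {P : Finset Pt} {D : Finset Dem} (hinst : IsInstance P D) :
    ∃ Q : Finset Pt, MFeasible ↑P ↑D ↑Q ∧ Q.card = optN ↑P ↑D :=
  Nat.sInf_mem (s := {n | ∃ Q : Finset Pt, MFeasible ↑P ↑D ↑Q ∧ Q.card = n})
    ⟨_, _, mFeasible_image_corner hinst, rfl⟩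

lemma exists_fin_enum_strictMono_comp {α β : Type*} [LinearOrder β] (s : Finset α) (f : α → β)
    (hf : Set.InjOn f s) : ∃ e : Fin s.card → α, (∀ i, e i ∈ s) ∧ StrictMono (f ∘ e) := by
  have hcard : (s.image f).card = s.card := card_image_of_injOn hf
  choose e he hfe using fun i => mem_image.1 (orderEmbOfFin_mem (s.image f) hcard i)
  refine ⟨e, he, fun i j hij => ?_⟩
  simpa only [Function.comp, hfe] using ((s.image f).orderEmbOfFin hcard).strictMono hij

lemma exists_between_avoiding_laminar {ι : Type*} (s : Finset ι) (a b : ι → ℝ)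
    (hlam : ∀ i ∈ s, ∀ j ∈ s, a i < a j → a j ≤ b i → b j ≤ b i) {α β : ℝ} (hαβ : α < β)
    (hcov : ∀ i ∈ s, ¬(a i ≤ α ∧ β ≤ b i)) :
    ∃ x, α < x ∧ x < β ∧ ∀ i ∈ s, x < a i ∨ b i < x := by
  set m := (insert α ((s.filter (a · ≤ α)).image b)).max' (insert_nonempty _ _)
  have hαm : α ≤ m := le_max' _ _ (mem_insert_self _ _)
  have hmβ : m < β := by
    refine (max'_lt_iff _ _).2 fun y hy => ?_
    rcases mem_insert.1 hy with rfl | hy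
    · exact hαβ
    · obtain ⟨i, hi, rfl⟩ := mem_image.1 hy
      obtain ⟨his, hai⟩ := mem_filter.1 hi
      exact lt_of_not_ge fun hβ => hcov i his ⟨hai, hβ⟩
  -- an interval starting in `(α, m]` lies inside the interval that ends at `m`
  have hm : ∀ j ∈ s, a j ≤ m → b j ≤ m := by
    intro j hj haj
    by_cases hjα : a j ≤ α
    · exact le_max' _ _ (mem_insert_of_mem (mem_image_of_mem _ (mem_filter.2 ⟨hj, hjα⟩)))
    rcases mem_insert.1 (max'_mem _ (insert_nonempty α ((s.filter (a · ≤ α)).image b)))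
      with hmα | hmb
    · exact absurd (haj.trans hmα.le) hjα
    · obtain ⟨i, hi, hbi⟩ := mem_image.1 hmb
      obtain ⟨his, hai⟩ := mem_filter.1 hi
      have hbi : b i = m := hbi
      rw [← hbi] at haj ⊢
      exact hlam i his j hj (hai.trans_lt (not_le.1 hjα)) haj
  set β' := (insert β ((s.filter (m < a ·)).image a)).min' (insert_nonempty _ _)
  have hmβ' : m < β' := by
    refine (lt_min'_iff _ _).2 fun y hy => ?_
    rcases mem_insert.1 hy with rfl | hy
    · exact hmβ
    · obtain ⟨i, hi, rfl⟩ := mem_image.1 hy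
      exact (mem_filter.1 hi).2
  obtain ⟨x, hmx, hxβ'⟩ := exists_between hmβ'
  refine ⟨x, hαm.trans_lt hmx, hxβ'.trans_le (min'_le _ _ (mem_insert_self _ _)), fun i hi => ?_⟩
  by_cases hai : m < a i
  · exact Or.inl (hxβ'.trans_le
      (min'_le _ _ (mem_insert_of_mem (mem_image_of_mem _ (mem_filter.2 ⟨hi, hai⟩)))))
  · exact Or.inr ((hm i hi (not_lt.1 hai)).trans_lt hmx)

lemma mem_rectInt_iff {p q z : Pt} (hpq : p ≤ q) :
    z ∈ RectInt p q ↔ p.1 < z.1 ∧ z.1 < q.1 ∧ p.2 < z.2 ∧ z.2 < q.2 := by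
  simp only [RectInt, Set.mem_ofPred_eq, min_eq_left hpq.1, max_eq_right hpq.1,
    min_eq_left hpq.2, max_eq_right hpq.2]

structure MonotoneIndependent (P : Finset Pt) (D : Finset Dem) : Prop where
  inst : IsInstance P D
  distinctX : DistinctX P
  distinctY : DistinctY P
  mono : ∀ d ∈ D, d.1.2 < d.2.2
  nonConflicting : ∀ d ∈ D, ∀ e ∈ D, d ≠ e → NonConflicting d e

def sepKey (d : Dem) : ℝ ×ₗ ℝ := toLex (d.2.2, d.1.1)

namespace MonotoneIndependent

variable {P : Finset Pt} {D : Finset Dem}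

lemma fst_le_snd (h : MonotoneIndependent P D) {d : Dem} (hd : d ∈ D) : d.1 ≤ d.2 :=
  ⟨(h.inst d hd).2.2.le, (h.mono d hd).le⟩

lemma sepKey_injOn (h : MonotoneIndependent P D) : Set.InjOn sepKey D := by
  intro d hd e he hde
  obtain ⟨htop, hleft⟩ := Prod.ext_iff.1 (toLex_inj.1 hde)
  exact Prod.ext (h.distinctX.eq_of_fst_eq (h.inst d hd).1 (h.inst e he).1 hleft)
    (h.distinctY.eq_of_snd_eq (h.inst d hd).2.1 (h.inst e he).2.1 htop)

/-- A top corner `(z.1, c.2.2)` of `c` at a height strictly inside the `y`-range of `d` cannot lie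
in the `x`-range `(d.1.1, d.2.1]`. -/
lemma lt_of_top_corner (h : MonotoneIndependent P D) {c d : Dem} (hc : c ∈ D) (hd : d ∈ D)
    {z : Pt} (hz : z = c.1 ∨ z = c.2) (hb : d.1.2 < c.2.2) (ht : c.2.2 < d.2.2)
    (hl : d.1.1 < z.1) : d.2.1 < z.1 := by
  have hzP : z ∈ P := by rcases hz with rfl | rfl; exacts [(h.inst c hc).1, (h.inst c hc).2.1]
  have hz₂ : z.2 ≤ c.2.2 := by rcases hz with rfl | rfl; exacts [(h.mono c hc).le, le_rfl]
  rcases lt_trichotomy d.2.1 z.1 with hlt | heq | hgt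
  · exact hlt
  · have hzd : z = d.2 := h.distinctX.eq_of_fst_eq hzP (h.inst d hd).2.1 heq.symm
    linarith [congrArg Prod.snd hzd]
  · have hcorner : (z.1, c.2.2) ∈ Corners c.1 c.2 := by
      rcases hz with rfl | rfl <;> simp [Corners]
    exact absurd ((mem_rectInt_iff (z := (z.1, c.2.2)) (h.fst_le_snd hd)).2 ⟨hl, hgt, hb, ht⟩)
      ((h.nonConflicting d hd c hc fun hdc => ht.ne (hdc ▸ rfl)).1 _ hcorner)

/-- The `x`-ranges of two demands crossing a common horizontal line form a laminar family. -/
lemma snd_fst_le_of_straddle (h : MonotoneIndependent P D) {d e : Dem} (hd : d ∈ D) (he : e ∈ D)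
    {t : ℝ} (hdt : d.1.2 < t) (htd : t < d.2.2) (het : e.1.2 < t) (hte : t < e.2.2)
    (hl : d.1.1 < e.1.1) (hle : e.1.1 ≤ d.2.1) : e.2.1 ≤ d.2.1 := by
  by_contra! hr
  rcases lt_trichotomy d.2.2 e.2.2 with htop | htop | htop
  · rcases hle.lt_or_eq with hlt | heq
    · exact hr.not_gt (h.lt_of_top_corner hd he (Or.inr rfl) (het.trans htd) htop hlt)
    · have := h.distinctX.eq_of_fst_eq (h.inst e he).1 (h.inst d hd).2.1 heq
      linarith [congrArg Prod.snd this]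
  · have := h.distinctY.eq_of_snd_eq (h.inst d hd).2.1 (h.inst e he).2.1 htop
    exact hr.ne (congrArg Prod.fst this)
  · exact hle.not_gt (h.lt_of_top_corner he hd (Or.inl rfl) (hdt.trans hte) htop hl)

lemma exists_left_bound (h : MonotoneIndependent P D) {d : Dem} (hd : d ∈ D) :
    ∃ L, d.1.1 < L ∧ L ≤ d.2.1 ∧ (∀ e ∈ D, e.2.2 = d.2.2 → d.1.1 < e.1.1 → L ≤ e.1.1) ∧
      ∃ c ∈ D, c.2.2 = d.2.2 ∧ ∃ z, (z = c.1 ∨ z = c.2) ∧ z.1 = L := by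
  set ends := insert d.2.1 ((D.filter fun e => e.2.2 = d.2.2 ∧ d.1.1 < e.1.1).image (·.1.1))
  refine ⟨ends.min' (insert_nonempty _ _), (lt_min'_iff _ _).2 fun y hy => ?_,
    min'_le _ _ (mem_insert_self _ _), fun e he htop hleft =>
      min'_le _ _ (mem_insert_of_mem (mem_image_of_mem _ (mem_filter.2 ⟨he, htop, hleft⟩))), ?_⟩
  · rcases mem_insert.1 hy with rfl | hy
    · exact (h.inst d hd).2.2
    · obtain ⟨e, he, rfl⟩ := mem_image.1 hy
      exact (mem_filter.1 he).2.2
  · rcases mem_insert.1 (min'_mem ends (insert_nonempty _ _)) with hL | hL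
    · exact ⟨d, hd, rfl, d.2, Or.inr rfl, hL.symm⟩
    · obtain ⟨c, hc, hcL⟩ := mem_image.1 hL
      exact ⟨c, (mem_filter.1 hc).1, (mem_filter.1 hc).2.1, c.1, Or.inl rfl, hcL⟩

lemma exists_separating_line (h : MonotoneIndependent P D) {d : Dem} (hd : d ∈ D) :
    ∃ x, d.1.1 < x ∧ x < d.2.1 ∧
      ∀ e ∈ D, sepKey d < sepKey e → VSeg x d.1.2 d.2.2 ∩ Rect e.1 e.2 = ∅ := by
  obtain ⟨L, hlL, hLr, hLsib, c, hc, hct, z, hz, hzL⟩ := h.exists_left_bound hd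
  set T := D.filter fun e => e.1.2 < d.2.2 ∧ d.2.2 < e.2.2
  have hlam : ∀ e ∈ T, ∀ e' ∈ T, e.1.1 < e'.1.1 → e'.1.1 ≤ e.2.1 → e'.2.1 ≤ e.2.1 := by
    intro e he e' he'
    simp only [T, mem_filter] at he he'
    exact h.snd_fst_le_of_straddle he.1 he'.1 he.2.1 he.2.2 he'.2.1 he'.2.2
  have hcov : ∀ e ∈ T, ¬(e.1.1 ≤ d.1.1 ∧ L ≤ e.2.1) := by
    rintro e he ⟨hel, hLe⟩
    obtain ⟨he, heb, het⟩ := mem_filter.1 he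
    have := h.lt_of_top_corner hc he hz (hct ▸ heb) (hct ▸ het) (by linarith)
    linarith
  obtain ⟨x, hlx, hxL, hxT⟩ :=
    exists_between_avoiding_laminar T (·.1.1) (·.2.1) hlam hlL hcov
  refine ⟨x, hlx, hxL.trans_le hLr, fun e he hde => ?_⟩
  rw [vSeg_inter_rect_eq_empty_iff (h.mono d hd).le (h.fst_le_snd he)]
  rcases Prod.Lex.lt_iff.1 hde with htop | ⟨htop, hleft⟩
  · rcases lt_trichotomy e.1.2 d.2.2 with hb | hb | hb
    · exact (hxT e (mem_filter.2 ⟨he, hb, htop⟩)).imp_right Or.inl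
    · have hed := h.distinctY.eq_of_snd_eq (h.inst e he).1 (h.inst d hd).2.1 hb
      exact Or.inl (hxL.trans_le (hLr.trans_eq (congrArg Prod.fst hed).symm))
    · exact Or.inr (Or.inr (Or.inl hb))
  · exact Or.inl (hxL.trans_le (hLsib e he htop.symm hleft))

lemma vertSeparable (h : MonotoneIndependent P D) : VertSeparable D := by
  obtain ⟨e, he, hsorted⟩ := exists_fin_enum_strictMono_comp D sepKey h.sepKey_injOn
  choose x hlx hxr hsep using fun i => h.exists_separating_line (he i)
  exact ⟨e, x, hsorted.injective.of_comp, he,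
    fun i => ⟨min_lt_of_left_lt (hlx i), lt_max_of_lt_right (hxr i)⟩,
    fun i j hij => hsep i (e j) (he j) (hsorted hij)⟩

end MonotoneIndependent

/-- For a MinGMConn instance with pairwise distinct x- and y-coordinates and
monotone demands, `IR(P,D) ≤ VS(P,D) ≤ opt(P,D)`. -/
theorem stmt0 (P : Finset Pt) (D : Finset Dem)
    (hinst : IsInstance P D) (hX : DistinctX P) (hY : DistinctY P)
    (hmono : ∀ d ∈ D, d.1.2 < d.2.2) :
    IRN ↑D ≤ VSN ↑D ∧ VSN ↑D ≤ optN ↑P ↑D := by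
  have hbdd : BddAbove {n | ∃ D' : Finset Dem, ↑D' ⊆ (↑D : Set Dem) ∧ D'.card = n ∧
      VertSeparable D'} :=
    ⟨D.card, by rintro n ⟨D', hsub, rfl, -⟩; exact card_le_card (coe_subset.1 hsub)⟩
  obtain ⟨Q, hQ, hQcard⟩ := exists_mFeasible_card_eq_optN hinst
  refine ⟨csSup_le' ?_, csSup_le' ?_⟩
  · rintro n ⟨D', hsub, rfl, hind⟩
    have hsub := coe_subset.1 hsub
    exact le_csSup hbdd ⟨D', coe_subset.2 hsub, rfl, MonotoneIndependent.vertSeparable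
      ⟨hinst.mono hsub, hX, hY, fun d hd => hmono d (hsub hd), hind⟩⟩
  · rintro n ⟨D', hsub, rfl, hvs⟩
    rw [← hQcard]
    exact card_le_card_of_vertSeparable (hinst.mono (coe_subset.1 hsub))
      hY (fun d hd => hmono d (coe_subset.1 hsub hd)) hvs (hQ.mono hsub)
end

section
/- For every integer n ≥ 1, let P = {(i,i) : 1 ≤ i ≤ n} ∪ {(i+n, i+n) : 1 ≤ i ≤ n} and D = {((i,i),(i+n,i+n)) : 1 ≤ i ≤ n} (so the demand rectangles are the n diagonally shifted squares R_i = R((i,i),(i+n,i+n))). Then IR(P,D) = 1 and VS(P,D) = n. In particular, the ratio VS/IR can be as large as the number of demands. -/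
/-!
Two squares `R_i`, `R_j` with `i < j` always conflict: the corner `(j, j)` of `R_j` lies in the
interior of `R_i`, because `i < j ≤ n < i + n`. Hence independent sets are singletons. On the other
hand, taking the squares from right to left, the vertical segment `x = i + n - 1/2` through `R_i`
lies to the right of every later square `R_j` (`j < i`), whose right side is at `x = j + n`.
-/

lemma NonConflicting.symm {d e : Dem} (h : NonConflicting d e) : NonConflicting e d :=
  ⟨h.2, h.1⟩

lemma IRN_eq_one_of_pairwise_not_nonConflicting {D : Set Dem} (hD : D.Nonempty)
    (hconf : D.Pairwise fun d e => ¬ NonConflicting d e) : IRN D = 1 := by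
  obtain ⟨d, hd⟩ := hD
  refine IsGreatest.csSup_eq ⟨⟨{d}, by simpa using hd, by simp, by simp⟩, ?_⟩
  rintro m ⟨D', hsub, rfl, hindep⟩
  refine Finset.card_le_one.mpr fun a ha b hb => ?_
  by_contra hab
  exact hconf (hsub ha) (hsub hb) hab (hindep a ha b hb hab)

lemma VSN_eq_card_of_vertSeparable {D : Finset Dem} (hD : VertSeparable D) :
    VSN ↑D = D.card := by
  refine IsGreatest.csSup_eq ⟨⟨D, subset_rfl, rfl, hD⟩, ?_⟩
  rintro m ⟨D', hsub, rfl, -⟩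
  exact Finset.card_le_card (Finset.coe_subset.mp hsub)

lemma vSeg_inter_rect_eq_empty {a y₁ y₂ : ℝ} {p q : Pt} (h : max p.1 q.1 < a) :
    VSeg a y₁ y₂ ∩ Rect p q = ∅ := by
  rw [Set.eq_empty_iff_forall_notMem]
  rintro z ⟨⟨rfl, -⟩, -, hz, -⟩
  exact hz.not_gt h

noncomputable def shiftedSquare (n i : ℕ) : Dem :=
  ((((i : ℝ), (i : ℝ)) : Pt), (((i : ℝ) + n, (i : ℝ) + n) : Pt))

lemma shiftedSquare_injective (n : ℕ) : Function.Injective (shiftedSquare n) := by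
  intro i j h
  have h₁ : (i : ℝ) = j := congrArg (fun d : Dem => d.1.1) h
  exact_mod_cast h₁

lemma card_image_shiftedSquare (n : ℕ) : ((Finset.Icc 1 n).image (shiftedSquare n)).card = n := by
  rw [Finset.card_image_of_injective _ (shiftedSquare_injective n), Nat.card_Icc,
    Nat.add_sub_cancel]

lemma min_shiftedSquare (n i : ℕ) :
    min (shiftedSquare n i).1.1 (shiftedSquare n i).2.1 = i := by
  simp [shiftedSquare]

lemma max_shiftedSquare (n i : ℕ) :
    max (shiftedSquare n i).1.1 (shiftedSquare n i).2.1 = i + n := by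
  simp [shiftedSquare]

lemma not_nonConflicting_shiftedSquare {n i j : ℕ} (hij : i < j) (hjn : j < i + n) :
    ¬ NonConflicting (shiftedSquare n i) (shiftedSquare n j) := by
  have hij' : (i : ℝ) < j := by exact_mod_cast hij
  have hjn' : (j : ℝ) < i + n := by exact_mod_cast hjn
  intro h
  refine h.1 ((j : ℝ), (j : ℝ)) (by simp [Corners, shiftedSquare]) ?_
  simp only [RectInt, shiftedSquare, Set.mem_ofPred_eq, le_add_iff_nonneg_right, Nat.cast_nonneg,
    min_eq_left, max_eq_right]
  exact ⟨hij', hjn', hij', hjn'⟩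

lemma pairwise_not_nonConflicting_shiftedSquare (n : ℕ) :
    (↑((Finset.Icc 1 n).image (shiftedSquare n)) : Set Dem).Pairwise
      fun d e => ¬ NonConflicting d e := by
  rw [Finset.coe_image, Set.InjOn.pairwise_image (shiftedSquare_injective n).injOn]
  intro i hi j hj hij
  simp only [Finset.coe_Icc, Set.mem_Icc] at hi hj
  rcases hij.lt_or_gt with h | h
  · exact not_nonConflicting_shiftedSquare h (by omega)
  · exact fun hc => not_nonConflicting_shiftedSquare h (by omega) hc.symm

lemma vertSeparable_image_shiftedSquare (n : ℕ) :
    VertSeparable ((Finset.Icc 1 n).image (shiftedSquare n)) := by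
  unfold VertSeparable
  rw [card_image_shiftedSquare]
  refine ⟨fun k => shiftedSquare n (n - k), fun k => ((n - k : ℕ) : ℝ) + n - 1 / 2,
    fun k l h => Fin.ext (by have : n - k = n - l := shiftedSquare_injective n h; omega),
    fun k => Finset.mem_image_of_mem _ (Finset.mem_Icc.mpr (by omega)), fun k => ?_,
    fun k l hkl => vSeg_inter_rect_eq_empty ?_⟩
  · have : (1 : ℝ) ≤ n := by exact_mod_cast k.pos
    rw [min_shiftedSquare, max_shiftedSquare]
    constructor <;> linarith
  · have : ((n - l : ℕ) : ℝ) + 1 ≤ ((n - k : ℕ) : ℝ) := by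
      exact_mod_cast (by omega : n - l + 1 ≤ n - k)
    rw [max_shiftedSquare]
    linarith

/-- For the instance with points `(i,i)` and `(i+n, i+n)` and the `n` diagonally
shifted demands `((i,i), (i+n,i+n))`, `1 ≤ i ≤ n`, we have `IR = 1` and `VS = n`. -/
theorem stmt3 (n : ℕ) (hn : 1 ≤ n) :
    IRN ↑((Finset.Icc 1 n).image fun i : ℕ =>
        ((((i : ℝ), (i : ℝ)) : Pt), (((i : ℝ) + n, (i : ℝ) + n) : Pt))) = 1 ∧
    VSN ↑((Finset.Icc 1 n).image fun i : ℕ =>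
        ((((i : ℝ), (i : ℝ)) : Pt), (((i : ℝ) + n, (i : ℝ) + n) : Pt))) = n := by
  refine ⟨IRN_eq_one_of_pairwise_not_nonConflicting ⟨shiftedSquare n 1, ?_⟩
    (pairwise_not_nonConflicting_shiftedSquare n), ?_⟩
  · exact Finset.mem_image_of_mem _ (Finset.mem_Icc.mpr ⟨le_rfl, hn⟩)
  · exact (VSN_eq_card_of_vertSeparable (vertSeparable_image_shiftedSquare n)).trans
      (card_image_shiftedSquare n)
end

section
/- Let (P,D) be a MinGMConn instance and let I = {[min(y(p),y(q)), max(y(p),y(q))] : (p,q) ∈ D} be the set of y-intervals of the demands. Then there exists a hitting set for I (a finite set R ⊆ ℝ such that every interval of I contains a point of R) of cardinality at most IS(P,D); in particular, the minimum cardinality of a hitting set for I is at most IS(P,D). -/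
/-! Greedy stabbing: stab the y-interval with the smallest upper end at that end, discard every
interval it hits, and repeat. The demands chosen have pairwise disjoint y-intervals, hence pairwise
disjoint left sides, so they form a left boundary independent set, and there is one stabbing point
per chosen demand. -/
theorem Finset.exists_pairwiseDisjoint_Icc_subset_forall_hi_mem {ι α : Type*} [LinearOrder α]
    (lo hi : ι → α) (s : Finset ι) (hle : ∀ i ∈ s, lo i ≤ hi i) :
    ∃ t ⊆ s, (t : Set ι).PairwiseDisjoint (fun i => Set.Icc (lo i) (hi i)) ∧
      ∀ i ∈ s, ∃ j ∈ t, hi j ∈ Set.Icc (lo i) (hi i) := by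
  classical
  induction s using Finset.strongInduction with
  | _ s ih =>
    rcases s.eq_empty_or_nonempty with rfl | hne
    · exact ⟨∅, subset_rfl, by simp, by simp⟩
    obtain ⟨i, hi_mem, hi_min⟩ := s.exists_min_image hi hne
    set s' := s.filter (fun e => hi i < lo e)
    have hi_not_mem : i ∉ s' := fun h => (Finset.mem_filter.1 h).2.not_ge (hle i hi_mem)
    have hs' : s' ⊂ s := ⟨Finset.filter_subset _ _, fun h => hi_not_mem (h hi_mem)⟩
    obtain ⟨t', ht's', ht'_disj, ht'_hit⟩ :=
      ih s' hs' fun e he => hle e (Finset.filter_subset _ _ he)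
    refine ⟨insert i t', Finset.insert_subset hi_mem (ht's'.trans hs'.subset), ?_, ?_⟩
    · rw [Finset.coe_insert]
      refine ht'_disj.insert fun j hj _ => Set.disjoint_left.2 fun x hxi hxj => ?_
      exact (hxi.2.trans_lt (Finset.mem_filter.1 (ht's' hj)).2).not_ge hxj.1
    · intro e he
      by_cases hlt : hi i < lo e
      · obtain ⟨j, hj, hj_mem⟩ := ht'_hit e (Finset.mem_filter.2 ⟨he, hlt⟩)
        exact ⟨j, Finset.mem_insert_of_mem hj, hj_mem⟩
      · exact ⟨i, Finset.mem_insert_self _ _, not_lt.1 hlt, hi_min e he⟩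

theorem leftBIS_of_pairwiseDisjoint {D' : Finset Dem}
    (h : (D' : Set Dem).PairwiseDisjoint fun d => Set.Icc (min d.1.2 d.2.2) (max d.1.2 d.2.2)) :
    LeftBIS D' := by
  rintro d hd e he hde z ⟨⟨-, hzd⟩, -, hze⟩
  exact (Set.disjoint_left.1 (h hd he hde) hzd hze).elim

theorem card_le_ISN {D D' : Finset Dem} (hsub : D' ⊆ D) (hbis : LeftBIS D' ∨ RightBIS D') :
    D'.card ≤ ISN D := by
  refine le_csSup ⟨D.card, ?_⟩ ⟨D', Finset.coe_subset.2 hsub, rfl, hbis⟩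
  rintro n ⟨D'', hD'', rfl, -⟩
  exact Finset.card_le_card (Finset.coe_subset.1 hD'')

theorem stmt5_general (D : Finset Dem) :
    ∃ R : Finset ℝ,
      (∀ d ∈ D, ∃ r ∈ R, min d.1.2 d.2.2 ≤ r ∧ r ≤ max d.1.2 d.2.2) ∧
      R.card ≤ ISN ↑D := by
  obtain ⟨S, hSD, hS_disj, hS_hit⟩ := Finset.exists_pairwiseDisjoint_Icc_subset_forall_hi_mem
    (fun d : Dem => min d.1.2 d.2.2) (fun d => max d.1.2 d.2.2) D fun _ _ => min_le_max
  refine ⟨S.image fun d => max d.1.2 d.2.2, fun d hd => ?_, ?_⟩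
  · obtain ⟨e, he, hmem⟩ := hS_hit d hd
    exact ⟨_, Finset.mem_image_of_mem _ he, hmem⟩
  · exact Finset.card_image_le.trans
      (card_le_ISN hSD (Or.inl (leftBIS_of_pairwiseDisjoint hS_disj)))

/-- The y-intervals of the demands admit a hitting set of cardinality at most
`IS(P,D)`. -/
theorem stmt5 (P : Finset Pt) (D : Finset Dem) (hinst : IsInstance P D) :
    ∃ R : Finset ℝ,
      (∀ d ∈ D, ∃ r ∈ R, min d.1.2 d.2.2 ≤ r ∧ r ≤ max d.1.2 d.2.2) ∧
      R.card ≤ ISN ↑D :=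
  stmt5_general D
end

section
/- There is an absolute constant C > 0 such that the following holds: for every integer s ≥ 2 and every s-thin MinGMConn instance (P,D) (the points of P have at most s distinct x-coordinates and pairwise distinct y-coordinates), there exists a feasible solution Q for (P,D) with |Q| ≤ C·(1 + log₂ s)·IS(P,D); equivalently, opt(P,D) ≤ C·(1 + log₂ s)·IS(P,D). -/
/-!
Pierce the `y`-ranges of all demands greedily by a set `T` of horizontal lines; the greedy choice
comes with pairwise disjoint `y`-ranges, one per line, so `#T ≤ IS(P,D)`. Label every line by the
`2`-adic valuation of its rank in `T` and route each demand `(p, q)` through the two bend points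
`(x(p), τ)`, `(x(q), τ)`, where `τ` is the line of largest label crossing the demand. Between two
lines of equal label there is one of larger label, so demands routed on distinct lines of equal
label have disjoint `y`-ranges: for each label the bend points form a boundary independent set.
Choosing `2^k ≥ s`, the labels `< k` contribute at most `k · IS` bend points per side, while the
at most `#T / 2^k` lines of label `≥ k` carry at most `s · #T / 2^k ≤ #T` of them.
-/

namespace MinGMConn

open Finset

section Ruler

variable {α : Type*} [LinearOrder α] (T : Finset α)

-- `1`-based on `T`, so that `padicValNat 2` never meets its junk value at `0`.
def rank (x : α) : ℕ := #{y ∈ T | y ≤ x}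

def rulerLabel (x : α) : ℕ := padicValNat 2 (rank T x)

lemma rank_mono : Monotone (rank T) := fun _ _ hxy =>
  card_le_card (monotone_filter_right T fun _ _ hz => hz.trans hxy)

lemma lt_of_rank_lt {x y : α} (h : rank T x < rank T y) : x < y :=
  lt_of_not_ge fun hyx => (rank_mono T hyx).not_gt h

lemma rank_strictMonoOn : StrictMonoOn (rank T) T := by
  intro x _ y hy hxy
  refine card_lt_card (ssubset_iff_of_subset (monotone_filter_right T fun _ _ hz => hz.trans hxy.le)
    |>.mpr ⟨y, mem_filter.mpr ⟨hy, le_rfl⟩, fun h => (mem_filter.mp h).2.not_gt hxy⟩)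

lemma rank_mem_Icc {x : α} (hx : x ∈ T) : rank T x ∈ Icc 1 #T :=
  mem_Icc.mpr ⟨card_pos.mpr ⟨x, mem_filter.mpr ⟨hx, le_rfl⟩⟩, card_filter_le _ _⟩

lemma image_rank : T.image (rank T) = Icc 1 #T := by
  refine eq_of_subset_of_card_le (fun n hn => ?_) ?_
  · obtain ⟨x, hx, rfl⟩ := mem_image.mp hn
    exact rank_mem_Icc T hx
  · rw [card_image_of_injOn (rank_strictMonoOn T).injOn, Nat.card_Icc, Nat.add_sub_cancel]

lemma padicValNat_two_lt_add_pow {n : ℕ} (hn : n ≠ 0) :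
    padicValNat 2 n < padicValNat 2 (n + 2 ^ padicValNat 2 n) := by
  have hnot := pow_succ_padicValNat_not_dvd (p := 2) hn
  obtain ⟨m, hm⟩ := pow_padicValNat_dvd (p := 2) (n := n)
  set w := padicValNat 2 n
  have hodd : ¬ 2 ∣ m := fun ⟨c, hc⟩ => hnot ⟨c, by rw [hm, hc, pow_succ, mul_assoc]⟩
  obtain ⟨c, hc⟩ : 2 ∣ m + 1 := by omega
  have hdvd : 2 ^ (w + 1) ∣ n + 2 ^ w := ⟨c, by rw [pow_succ, mul_assoc, ← hc, hm]; ring⟩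
  exact (padicValNat_dvd_iff_le (by omega)).mp hdvd

lemma add_le_of_dvd_of_lt {m i j : ℕ} (hi : m ∣ i) (hj : m ∣ j) (hij : i < j) : i + m ≤ j := by
  obtain ⟨a, rfl⟩ := hi
  obtain ⟨b, rfl⟩ := hj
  have hab : a + 1 ≤ b := Nat.lt_of_mul_lt_mul_left hij
  nlinarith

/-- If the ranks are `2ʷ·u < 2ʷ·v` with `u` odd, the rank `2ʷ·(u + 1)` lies strictly between them
and has a larger valuation. -/
lemma exists_between_rulerLabel_lt {x y : α} (hx : x ∈ T) (hy : y ∈ T) (hxy : x < y)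
    (hl : rulerLabel T x = rulerLabel T y) :
    ∃ z ∈ T, x < z ∧ z < y ∧ rulerLabel T x < rulerLabel T z := by
  have hi := (mem_Icc.mp (rank_mem_Icc T hx)).1
  have hj := mem_Icc.mp (rank_mem_Icc T hy)
  set w := rulerLabel T x
  have hij : rank T x < rank T y := rank_strictMonoOn T hx hy hxy
  have hm : rank T x + 2 ^ w ≤ rank T y :=
    add_le_of_dvd_of_lt pow_padicValNat_dvd (hl ▸ pow_padicValNat_dvd) hij
  have hvm : w < padicValNat 2 (rank T x + 2 ^ w) := padicValNat_two_lt_add_pow (by omega)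
  have hmy : rank T x + 2 ^ w < rank T y := hm.lt_of_ne fun h => by
    have hwy : w = padicValNat 2 (rank T y) := hl
    rw [h] at hvm
    omega
  obtain ⟨z, hz, hzm⟩ := mem_image.mp <| (image_rank T).symm ▸
    mem_Icc.mpr ⟨Nat.le_add_right_of_le hi, hmy.le.trans hj.2⟩
  refine ⟨z, hz, lt_of_rank_lt T ?_, lt_of_rank_lt T (hzm ▸ hmy), ?_⟩
  · rw [hzm]
    exact Nat.lt_add_of_pos_right (Nat.two_pow_pos w)
  · rwa [rulerLabel, hzm]

lemma card_filter_le_rulerLabel_mul_pow_le (k : ℕ) :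
    #{x ∈ T | k ≤ rulerLabel T x} * 2 ^ k ≤ #T := by
  have hcard : #{x ∈ T | k ≤ rulerLabel T x} ≤ #{n ∈ Ioc 0 #T | 2 ^ k ∣ n} := by
    refine card_le_card_of_injOn (rank T) (fun x hx => ?_)
      ((rank_strictMonoOn T).injOn.mono (coe_subset.mpr (filter_subset _ _)))
    obtain ⟨hxT, hk⟩ := mem_filter.mp hx
    have hr := mem_Icc.mp (rank_mem_Icc T hxT)
    refine mem_filter.mpr ⟨mem_Ioc.mpr ⟨hr.1, hr.2⟩, ?_⟩
    exact (pow_dvd_pow 2 hk).trans pow_padicValNat_dvd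
  rw [Nat.Ioc_filter_dvd_card_eq_div] at hcard
  exact (Nat.mul_le_mul_right _ hcard).trans (Nat.div_mul_le_self _ _)

/-- The element between `x` and `y` with a larger label lies in neither interval. -/
lemma disjoint_Icc_of_rulerLabel_eq {a b a' b' x y : α} (hx : x ∈ T) (hy : y ∈ T)
    (hxI : x ∈ Set.Icc a b) (hyI : y ∈ Set.Icc a' b')
    (hxmax : ∀ z ∈ T, z ∈ Set.Icc a b → rulerLabel T z ≤ rulerLabel T x)
    (hymax : ∀ z ∈ T, z ∈ Set.Icc a' b' → rulerLabel T z ≤ rulerLabel T y)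
    (hl : rulerLabel T x = rulerLabel T y) (hxy : x < y) :
    Disjoint (Set.Icc a b) (Set.Icc a' b') := by
  obtain ⟨z, hz, hxz, hzy, hlz⟩ := exists_between_rulerLabel_lt T hx hy hxy hl
  have hbz : b < z := lt_of_not_ge fun h => (hxmax z hz ⟨hxI.1.trans hxz.le, h⟩).not_gt hlz
  have hza' : z < a' := lt_of_not_ge fun h => (hymax z hz ⟨h, hzy.le.trans hyI.2⟩).not_gt (hl ▸ hlz)
  exact Set.disjoint_left.mpr fun t ht ht' => (ht.2.trans_lt (hbz.trans hza')).not_ge ht'.1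

end Ruler

lemma exists_piercing_card_le_pairwiseDisjoint {ι α : Type*} [LinearOrder α] (F : Finset ι)
    (lo hi : ι → α) (hlohi : ∀ i ∈ F, lo i ≤ hi i) :
    ∃ T : Finset α, ∃ G ⊆ F, #T ≤ #G ∧ (∀ i ∈ F, ∃ τ ∈ T, τ ∈ Set.Icc (lo i) (hi i)) ∧
      (G : Set ι).PairwiseDisjoint fun i => Set.Icc (lo i) (hi i) := by
  classical
  induction F using Finset.strongInduction with
  | H F ih =>
  rcases F.eq_empty_or_nonempty with rfl | hne
  · exact ⟨∅, ∅, subset_rfl, le_rfl, by simp, by simp⟩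
  -- Greedy step: pierce at the smallest right end, recurse on the intervals lying beyond it.
  obtain ⟨i₀, hi₀, hmin⟩ := F.exists_min_image hi hne
  have hi₀F' : i₀ ∉ F.filter fun i => hi i₀ < lo i := fun h =>
    (mem_filter.mp h).2.not_ge (hlohi i₀ hi₀)
  obtain ⟨T, G, hGF, hTG, hpierce, hdisj⟩ :=
    ih (F.filter fun i => hi i₀ < lo i)
      (filter_ssubset.mpr ⟨i₀, hi₀, fun h => hi₀F' (mem_filter.mpr ⟨hi₀, h⟩)⟩)
      fun i hiF => hlohi i (mem_filter.mp hiF).1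
  refine ⟨insert (hi i₀) T, insert i₀ G, insert_subset hi₀ (hGF.trans (filter_subset _ _)),
    ?_, fun i hiF => ?_, ?_⟩
  · rw [card_insert_of_notMem fun h => hi₀F' (hGF h)]
    exact (card_insert_le _ _).trans (Nat.succ_le_succ hTG)
  · by_cases h : lo i ≤ hi i₀
    · exact ⟨hi i₀, mem_insert_self _ _, h, hmin i hiF⟩
    · obtain ⟨τ, hτ, hτi⟩ := hpierce i (mem_filter.mpr ⟨hiF, not_le.mp h⟩)
      exact ⟨τ, mem_insert_of_mem hτ, hτi⟩
  · rw [coe_insert]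
    refine hdisj.insert fun j hj _ => Set.disjoint_left.mpr fun t ht ht' => ?_
    exact (ht.2.trans_lt (mem_filter.mp (hGF hj)).2).not_ge ht'.1

def yInterval (d : Dem) : Set ℝ := Set.Icc (min d.1.2 d.2.2) (max d.1.2 d.2.2)

lemma subsingleton_VSeg_inter {a a' y₁ y₂ y₁' y₂' : ℝ}
    (h : a ≠ a' ∨
      Disjoint (Set.Icc (min y₁ y₂) (max y₁ y₂)) (Set.Icc (min y₁' y₂') (max y₁' y₂'))) :
    (VSeg a y₁ y₂ ∩ VSeg a' y₁' y₂').Subsingleton := by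
  rintro z ⟨⟨hza, hz⟩, ⟨hza', hz'⟩⟩
  rcases h with h | h
  · exact absurd (hza.symm.trans hza') h
  · exact absurd hz' (Set.disjoint_left.mp h hz)

lemma bddAbove_boundaryIndependent_card (D : Finset Dem) :
    BddAbove {n | ∃ D' : Finset Dem, ↑D' ⊆ (↑D : Set Dem) ∧ D'.card = n ∧
      (LeftBIS D' ∨ RightBIS D')} :=
  ⟨#D, fun _ ⟨_, hsub, hcard, _⟩ => hcard ▸ card_le_card (coe_subset.mp hsub)⟩

lemma card_le_ISN_of_left {D S : Finset Dem} (hS : S ⊆ D)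
    (h : (S : Set Dem).Pairwise fun d e => d.1.1 ≠ e.1.1 ∨ Disjoint (yInterval d) (yInterval e)) :
    #S ≤ ISN ↑D :=
  le_csSup (bddAbove_boundaryIndependent_card D)
    ⟨S, coe_subset.mpr hS, rfl, Or.inl fun _ hd _ he hde => subsingleton_VSeg_inter (h hd he hde)⟩

lemma card_le_ISN_of_right {D S : Finset Dem} (hS : S ⊆ D)
    (h : (S : Set Dem).Pairwise fun d e => d.2.1 ≠ e.2.1 ∨ Disjoint (yInterval d) (yInterval e)) :
    #S ≤ ISN ↑D :=
  le_csSup (bddAbove_boundaryIndependent_card D)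
    ⟨S, coe_subset.mpr hS, rfl, Or.inr fun _ hd _ he hde => subsingleton_VSeg_inter (h hd he hde)⟩

lemma mConnected_of_bend {S : Set Pt} {p q : Pt} {y : ℝ}
    (hy : y ∈ Set.Icc (min p.2 q.2) (max p.2 q.2)) (hp : p ∈ S) (hq : q ∈ S)
    (hpy : (p.1, y) ∈ S) (hqy : (q.1, y) ∈ S) : MConnected S p q := by
  refine ⟨3, ![p, (p.1, y), (q.1, y), q], rfl, rfl, ?_, ?_, ?_⟩
  · intro i
    fin_cases i <;> assumption
  · intro i
    fin_cases i
    exacts [Or.inl rfl, Or.inr rfl, Or.inl rfl]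
  · have hsplit : |p.2 - y| + |y - q.2| = |p.2 - q.2| := by
      have := dist_add_dist_of_mem_segment (by rw [segment_eq_uIcc]; exact hy)
      rwa [Real.dist_eq, Real.dist_eq, Real.dist_eq] at this
    simp only [Fin.sum_univ_three, dist1, Fin.isValue, Matrix.cons_val_zero, Matrix.cons_val_one, Matrix.cons_val,
      Fin.castSucc_zero, Fin.succ_zero_eq_one, Fin.castSucc_one, Fin.succ_one_eq_two,
      Fin.reduceCastSucc, Fin.reduceSucc, sub_self, abs_zero]
    linarith

lemma optN_le_card {P : Set Pt} {D : Set Dem} {Q : Finset Pt} (hQ : MFeasible P D ↑Q) :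
    optN P D ≤ #Q :=
  Nat.sInf_le ⟨Q, hQ, rfl⟩

lemma exists_bendLevel (T : Finset ℝ) (D : Finset Dem) (hT : ∀ d ∈ D, ∃ τ ∈ T, τ ∈ yInterval d) :
    ∃ r : Dem → ℝ, (∀ d ∈ D, r d ∈ T ∧ r d ∈ yInterval d) ∧
      ∀ d ∈ D, ∀ e ∈ D, rulerLabel T (r d) = rulerLabel T (r e) → r d ≠ r e →
        Disjoint (yInterval d) (yInterval e) := by
  classical
  have hmax : ∀ d ∈ D, ∃ τ ∈ T.filter (· ∈ yInterval d),
      ∀ σ ∈ T.filter (· ∈ yInterval d), rulerLabel T σ ≤ rulerLabel T τ := fun d hd =>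
    let ⟨τ, hτ, hτd⟩ := hT d hd
    exists_max_image _ _ ⟨τ, mem_filter.mpr ⟨hτ, hτd⟩⟩
  choose! r hr hrmax using hmax
  have hr' : ∀ d ∈ D, r d ∈ T ∧ r d ∈ yInterval d := fun d hd => mem_filter.mp (hr d hd)
  have hsep : ∀ d ∈ D, ∀ e ∈ D, rulerLabel T (r d) = rulerLabel T (r e) → r d < r e →
      Disjoint (yInterval d) (yInterval e) := fun d hd e he hl hlt =>
    disjoint_Icc_of_rulerLabel_eq T (hr' d hd).1 (hr' e he).1 (hr' d hd).2 (hr' e he).2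
      (fun z hz hzd => hrmax d hd z (mem_filter.mpr ⟨hz, hzd⟩))
      (fun z hz hze => hrmax e he z (mem_filter.mpr ⟨hz, hze⟩)) hl hlt
  refine ⟨r, hr', fun d hd e he hl hne => ?_⟩
  rcases hne.lt_or_gt with h | h
  · exact hsep d hd e he hl h
  · exact (hsep e he d hd hl.symm h).symm

lemma card_image_bend_le {P : Finset Pt} {D : Finset Dem} {T : Finset ℝ} {r col : Dem → ℝ}
    (k : ℕ) (hcol : ∀ d ∈ D, col d ∈ P.image Prod.fst) (hr : ∀ d ∈ D, r d ∈ T)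
    (hsep : ∀ d ∈ D, ∀ e ∈ D, rulerLabel T (r d) = rulerLabel T (r e) → r d ≠ r e →
      Disjoint (yInterval d) (yInterval e))
    (hIS : ∀ S ⊆ D, (S : Set Dem).Pairwise
      (fun d e => col d ≠ col e ∨ Disjoint (yInterval d) (yInterval e)) → #S ≤ ISN ↑D) :
    #(D.image fun d => (col d, r d)) ≤
      k * ISN ↑D + #(P.image Prod.fst) * #{τ ∈ T | k ≤ rulerLabel T τ} := by
  set f : Dem → Pt := fun d => (col d, r d)
  have hlevel : ∀ w, #((D.filter fun d => rulerLabel T (r d) = w).image f) ≤ ISN ↑D := by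
    intro w
    obtain ⟨S, hS, hinj, hSimg⟩ := exists_subset_injOn_image_eq_of_surjOn (f := f) _ _
      (by rw [coe_image]; exact Set.surjOn_image f ↑(D.filter fun d => rulerLabel T (r d) = w))
    rw [← hSimg, card_image_of_injOn hinj]
    have hSD : ∀ d ∈ S, d ∈ D ∧ rulerLabel T (r d) = w := fun d hd => mem_filter.mp (hS hd)
    refine hIS S (fun d hd => (hSD d hd).1) fun d hd e he hde => ?_
    by_cases hc : col d = col e
    · refine Or.inr (hsep d (hSD d hd).1 e (hSD e he).1 ((hSD d hd).2.trans (hSD e he).2.symm) ?_)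
      exact fun h => hinj.ne hd he hde (Prod.ext hc h)
    · exact Or.inl hc
  have hsub : D.image f ⊆
      (range k).biUnion (fun w => (D.filter fun d => rulerLabel T (r d) = w).image f) ∪
        P.image Prod.fst ×ˢ {τ ∈ T | k ≤ rulerLabel T τ} := by
    intro z hz
    obtain ⟨d, hd, rfl⟩ := mem_image.mp hz
    rcases lt_or_ge (rulerLabel T (r d)) k with h | h
    · exact mem_union_left _ (mem_biUnion.mpr
        ⟨_, mem_range.mpr h, mem_image_of_mem f (mem_filter.mpr ⟨hd, rfl⟩)⟩)
    · exact mem_union_right _ (mem_product.mpr ⟨hcol d hd, mem_filter.mpr ⟨hr d hd, h⟩⟩)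
  calc #(D.image f) ≤ _ := card_le_card hsub
    _ ≤ _ := card_union_le _ _
    _ ≤ _ := by
      rw [card_product]
      gcongr
      simpa using card_biUnion_le_card_mul (range k) _ _ fun w _ => hlevel w

theorem exists_feasible_card_le (P : Finset Pt) (D : Finset Dem) (hD : IsInstance P D) (k : ℕ)
    (hk : #(P.image Prod.fst) ≤ 2 ^ k) :
    ∃ Q : Finset Pt, MFeasible ↑P ↑D ↑Q ∧ #Q ≤ 2 * (k + 1) * ISN ↑D := by
  obtain ⟨T, G, hGD, hTG, hpierce, hdisj⟩ := exists_piercing_card_le_pairwiseDisjoint D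
    (fun d => min d.1.2 d.2.2) (fun d => max d.1.2 d.2.2) fun _ _ => min_le_max
  have hT : #T ≤ ISN ↑D := hTG.trans (card_le_ISN_of_left hGD (hdisj.mono' fun _ _ h => Or.inr h))
  obtain ⟨r, hr, hsep⟩ := exists_bendLevel T D hpierce
  have hgrid : #(P.image Prod.fst) * #{τ ∈ T | k ≤ rulerLabel T τ} ≤ ISN ↑D :=
    calc _ ≤ 2 ^ k * #{τ ∈ T | k ≤ rulerLabel T τ} := Nat.mul_le_mul_right _ hk
      _ ≤ #T := by rw [mul_comm]; exact card_filter_le_rulerLabel_mul_pow_le T k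
      _ ≤ ISN ↑D := hT
  have hL := card_image_bend_le k (col := fun d => d.1.1)
    (fun d hd => mem_image_of_mem _ (hD d hd).1) (fun d hd => (hr d hd).1) hsep
    fun _ hS => card_le_ISN_of_left hS
  have hR := card_image_bend_le k (col := fun d => d.2.1)
    (fun d hd => mem_image_of_mem _ (hD d hd).2.1) (fun d hd => (hr d hd).1) hsep
    fun _ hS => card_le_ISN_of_right hS
  refine ⟨D.image (fun d => (d.1.1, r d)) ∪ D.image (fun d => (d.2.1, r d)), fun d hd => ?_, ?_⟩
  · exact mConnected_of_bend (hr d hd).2 (Or.inl (hD d hd).1) (Or.inl (hD d hd).2.1)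
      (Or.inr (mem_union_left _ (mem_image_of_mem _ hd)))
      (Or.inr (mem_union_right _ (mem_image_of_mem _ hd)))
  · have := card_union_le (D.image (fun d => (d.1.1, r d))) (D.image (fun d => (d.2.1, r d)))
    linarith

end MinGMConn

/-- There is an absolute constant `C > 0` such that every `s`-thin instance
(`s ≥ 2`) has a feasible solution of size at most `C·(1 + log₂ s)·IS(P,D)`; equivalently,
`opt(P,D) ≤ C·(1 + log₂ s)·IS(P,D)`. -/
theorem stmt6 : ∃ C : ℝ, 0 < C ∧
    ∀ (s : ℕ), 2 ≤ s →
    ∀ (P : Finset Pt) (D : Finset Dem),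
      IsInstance P D → DistinctY P → (P.image Prod.fst).card ≤ s →
      (∃ Q : Finset Pt, MFeasible ↑P ↑D ↑Q ∧
        (Q.card : ℝ) ≤ C * (1 + Real.logb 2 s) * (ISN ↑D : ℝ)) ∧
      (optN ↑P ↑D : ℝ) ≤ C * (1 + Real.logb 2 s) * (ISN ↑D : ℝ) := by
  refine ⟨4, by norm_num, fun s _ P D hD _ hcols => ?_⟩
  obtain ⟨Q, hQ, hQcard⟩ := MinGMConn.exists_feasible_card_le P D hD (Nat.log 2 s + 1)
    (hcols.trans (Nat.lt_pow_succ_log_self one_lt_two s).le)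
  have hlog : (Nat.log 2 s : ℝ) ≤ Real.logb 2 s := Real.natLog_le_logb s 2
  have hcard : (Q.card : ℝ) ≤ 4 * (1 + Real.logb 2 s) * (ISN ↑D : ℝ) := by
    have hQ' : (Q.card : ℝ) ≤ 2 * ((Nat.log 2 s : ℝ) + 2) * ISN ↑D := by
      exact_mod_cast hQcard
    nlinarith [(Nat.log 2 s).cast_nonneg (α := ℝ), (ISN (↑D : Set Dem)).cast_nonneg (α := ℝ)]
  exact ⟨⟨Q, hQ, hcard⟩, (Nat.cast_le.mpr (MinGMConn.optN_le_card hQ)).trans hcard⟩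
end
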